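/- For every integer k ≥ 1, the rhombus of side length k (the simple grid polygon with vertices 0, k·(1,0), k·(1,0) + k·(1/2, √3/2), and k·(1/2, √3/2)) has perimeter 4k and its billiards permutation consists of exactly k cycles, each of length 4; in particular cyc = k = ⌊(perim + 2)/4⌋. -/

import Mathlib

/-!
Formalization of triangular-grid billiards (Defant–Jiradilok) for simple grid polygons.

Lattice coordinates: the pair `(a, b) : ℤ × ℤ` represents the planar point
`a•(1,0) + b•(1/2, √3/2)` of the triangular grid.
-/

noncomputable section
open scoped Classical

/-- Lattice coordinates for vertices of the triangular grid. -/
abbrev GridV : Type := ℤ × ℤ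

/-- The planar position of a lattice point. -/
def toPlane (v : GridV) : ℝ × ℝ :=
  ((v.1 : ℝ) + (v.2 : ℝ) / 2, (v.2 : ℝ) * Real.sqrt 3 / 2)

/-- A pane (side of a grid cell).  `dir = 0` : the unit segment from `base` to `base + (1,0)`
(making a 0° angle with the positive x-axis); `dir = 1` : to `base + (0,1)` (60°);
`dir = 2` : to `base + (-1,1)` (120°). -/
structure TPane where
  base : GridV
  dir : ZMod 3
deriving DecidableEq

/-- The second endpoint of a pane. -/
def TPane.head (p : TPane) : GridV :=
  p.base + (if p.dir = 0 then ((1 : ℤ), (0 : ℤ)) else if p.dir = 1 then (0, 1) else (-1, 1))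

/-- The closed unit segment in the plane corresponding to a pane. -/
def TPane.seg (p : TPane) : Set (ℝ × ℝ) := segment ℝ (toPlane p.base) (toPlane p.head)

/-- A unit grid triangle.  An upward triangle with base point `v` has vertices
`v, v+(1,0), v+(0,1)`; a downward one has vertices `v+(1,0), v+(0,1), v+(1,1)`. -/
structure TCell where
  base : GridV
  up : Bool
deriving DecidableEq

def TCell.vertices (c : TCell) : Finset GridV :=
  if c.up then {c.base, c.base + (1, 0), c.base + (0, 1)}
  else {c.base + (1, 0), c.base + (0, 1), c.base + (1, 1)}

/-- The closed triangular region of a grid cell in the plane. -/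
def TCell.region (c : TCell) : Set (ℝ × ℝ) := convexHull ℝ ↑(c.vertices.image toPlane)

/-- The edge of a cell with a given label: `0` = horizontal, `1` = at 60°, `2` = at 120°. -/
def TCell.edge (c : TCell) (i : ZMod 3) : TPane :=
  if c.up then
    (if i = 0 then ⟨c.base, 0⟩ else if i = 1 then ⟨c.base, 1⟩ else ⟨c.base + (1, 0), 2⟩)
  else
    (if i = 0 then ⟨c.base + (0, 1), 0⟩ else if i = 1 then ⟨c.base + (1, 0), 1⟩
     else ⟨c.base + (1, 0), 2⟩)

/-- The upward triangle adjacent to a pane. -/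
def TPane.upCell (p : TPane) : TCell :=
  if p.dir = 2 then ⟨p.base - (1, 0), true⟩ else ⟨p.base, true⟩

/-- The downward triangle adjacent to a pane. -/
def TPane.downCell (p : TPane) : TCell :=
  if p.dir = 0 then ⟨p.base - (0, 1), false⟩ else ⟨p.base - (1, 0), false⟩

/-- The planar region covered by a set of grid cells. -/
def polyRegion (P : Finset TCell) : Set (ℝ × ℝ) := ⋃ c ∈ P, c.region

/-- A simple grid polygon, identified with the (nonempty) finite set of unit grid triangles it
contains; its region must be homeomorphic to a closed disk. -/
def IsSimpleGridPolygon (P : Finset TCell) : Prop :=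
  P.Nonempty ∧ Nonempty (↥(polyRegion P) ≃ₜ ↥(Metric.closedBall (0 : ℝ × ℝ) 1))

/-- A pane is a boundary pane of `P` when exactly one of the two cells adjacent to it
belongs to `P`. -/
def IsBoundaryPane (P : Finset TCell) (p : TPane) : Prop :=
  (p.upCell ∈ P ∧ p.downCell ∉ P) ∨ (p.upCell ∉ P ∧ p.downCell ∈ P)

/-- The finite set of boundary panes of `P`. -/
def boundaryPanes (P : Finset TCell) : Finset TPane :=
  (P.biUnion fun c => {c.edge 0, c.edge 1, c.edge 2}).filter (IsBoundaryPane P)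

/-- The perimeter of `P`: the number of its boundary panes. -/
def perim (P : Finset TCell) : ℕ := (boundaryPanes P).card

/-- A pane is an interior pane of `P` when both adjacent cells belong to `P`. -/
def IsInteriorPane (P : Finset TCell) (p : TPane) : Prop := p.upCell ∈ P ∧ p.downCell ∈ P

/-- The cell of `P` into which the beam emitted from a boundary pane `p` travels. -/
def startCell (P : Finset TCell) (p : TPane) : TCell :=
  if p.upCell ∈ P then p.upCell else p.downCell

/-- The other cell adjacent to the pane `p`. -/
def nextCell (p : TPane) (c : TCell) : TCell := if c = p.upCell then p.downCell else p.upCell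

/-- One step of the billiards process.  A state `(p, c)` records that the beam has just crossed
(or been emitted from, or reflected at) the pane `p` heading into the cell `c`.
Inside an upward cell a beam entering through the edge labeled `i` exits through the edge
labeled `i - 1` (mod 3); inside a downward cell, through the edge labeled `i + 1`.  At a
boundary pane it reflects back into the same cell; at an interior pane it crosses into
the adjacent cell. -/
def bStep (P : Finset TCell) (st : TPane × TCell) : TPane × TCell :=
  let q := st.2.edge (if st.2.up then st.1.dir - 1 else st.1.dir + 1)
  if IsBoundaryPane P q then (q, st.2) else (q, nextCell q st.2)

/-- `BeamTo P b b'` : the beam emitted from the midpoint of the boundary pane `b` first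
reaches the boundary of `P` again at the pane `b'`. -/
def BeamTo (P : Finset TCell) (b b' : TPane) : Prop :=
  ∃ k : ℕ, 0 < k ∧ IsBoundaryPane P b' ∧ ((bStep P)^[k] (b, startCell P b)).1 = b' ∧
    ∀ m : ℕ, 0 < m → m < k → ¬ IsBoundaryPane P (((bStep P)^[m] (b, startCell P b)).1)

/-- `π` is the billiards permutation of the grid polygon `P`. -/
def IsBilliards (P : Finset TCell) (π : Equiv.Perm ↥(boundaryPanes P)) : Prop :=
  ∀ b : ↥(boundaryPanes P), BeamTo P b.1 (π b).1

/-- The orbits (cycles) of a permutation of a finite type, as a finite set of finite sets. -/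
def permOrbits {α : Type*} [Fintype α] [DecidableEq α] (π : Equiv.Perm α) :
    Finset (Finset α) :=
  Finset.univ.image fun a => Finset.univ.filter fun b => π.SameCycle a b

/-- The number of cycles of a permutation; for a billiards permutation this is the number of
distinct light-beam trajectories. -/
def cycCount {α : Type*} [Fintype α] [DecidableEq α] (π : Equiv.Perm α) : ℕ :=
  (permOrbits π).card

/-- `P` is primitive: no interior pane cuts `P` into two disconnected regions. -/
def IsPrimitive (P : Finset TCell) : Prop :=
  ∀ p : TPane, IsInteriorPane P p → IsPreconnected (polyRegion P \ p.seg)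


/-- The rhombus of side length `k`, with vertices `0`, `k•(1,0)`, `k•(1,0) + k•(1/2,√3/2)` and
`k•(1/2,√3/2)` (in lattice coordinates the cells with base point in `[0,k)²`). -/
def rhombus (k : ℕ) : Finset TCell :=
  ((Finset.range k ×ˢ Finset.range k).image fun ab =>
    (⟨((ab.1 : ℤ), (ab.2 : ℤ)), true⟩ : TCell)) ∪
  ((Finset.range k ×ˢ Finset.range k).image fun ab =>
    (⟨((ab.1 : ℤ), (ab.2 : ℤ)), false⟩ : TCell))

/-!
In lattice coordinates the rhombus is the square `[0, k]²`, so its boundary panes are the `k`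
bottom, top, right and left panes, indexed by `a < k`. A beam from the bottom pane `a` runs straight
up to the top pane `a`; from the top pane `a` it zigzags down-right to the right pane `a`; from the
right pane `b` it runs along row `b` to the left pane `b`; from the left pane `b` it zigzags
down-right to the bottom pane `b`. Hence the billiards permutation is conjugate to the rotation
`(i, a) ↦ (i + 1, a)` of `ZMod 4 × Fin k`, whose cycles are the `k` fibres `ZMod 4 × {a}`. The
region is a linear image of a square, hence a closed disk.
-/

lemma ZMod.three_cases (d : ZMod 3) : d = 0 ∨ d = 1 ∨ d = 2 := by
  revert d; decide

section Rotation

variable {α β : Type*} {m : ℕ} {π : Equiv.Perm α} {g : ZMod m × β ≃ α}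

lemma pow_apply_of_rotate (hπ : ∀ x, π (g x) = g (x.1 + 1, x.2)) (n : ℕ) (x : ZMod m × β) :
    (π ^ n) (g x) = g (x.1 + n, x.2) := by
  induction n with
  | zero => simp
  | succ n ih => rw [pow_succ', Equiv.Perm.mul_apply, ih, hπ, Nat.cast_succ, add_assoc]

lemma sameCycle_iff_of_rotate [Finite α] [NeZero m] (hπ : ∀ x, π (g x) = g (x.1 + 1, x.2))
    (x y : ZMod m × β) :
    π.SameCycle (g x) (g y) ↔ x.2 = y.2 := by
  constructor
  · intro h
    obtain ⟨n, -, hn⟩ := h.exists_pow_eq'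
    rw [pow_apply_of_rotate hπ, g.apply_eq_iff_eq] at hn
    rw [← hn]
  · intro h
    refine ⟨(y.1 - x.1).val, ?_⟩
    rw [zpow_natCast, pow_apply_of_rotate hπ, ZMod.natCast_zmod_val, add_sub_cancel, h]

lemma filter_sameCycle_of_rotate [Fintype α] [DecidableEq α] [NeZero m]
    (hπ : ∀ x, π (g x) = g (x.1 + 1, x.2)) (x : ZMod m × β) :
    Finset.univ.filter (π.SameCycle (g x)) = (Finset.univ ×ˢ {x.2}).map g.toEmbedding := by
  ext y
  obtain ⟨y, rfl⟩ := g.surjective y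
  simp [sameCycle_iff_of_rotate hπ, Prod.ext_iff, eq_comm]

lemma permOrbits_of_rotate [Fintype α] [DecidableEq α] [Fintype β] [NeZero m]
    (hπ : ∀ x, π (g x) = g (x.1 + 1, x.2)) :
    permOrbits π = Finset.univ.image fun b => (Finset.univ ×ˢ {b}).map g.toEmbedding := by
  ext s
  simp only [permOrbits, Finset.mem_image, Finset.mem_univ, true_and]
  constructor
  · rintro ⟨y, rfl⟩
    obtain ⟨x, rfl⟩ := g.surjective y
    exact ⟨x.2, (filter_sameCycle_of_rotate hπ x).symm⟩
  · rintro ⟨b, rfl⟩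
    exact ⟨g (0, b), filter_sameCycle_of_rotate hπ (0, b)⟩

lemma card_of_mem_permOrbits_of_rotate [Fintype α] [DecidableEq α] [Fintype β] [NeZero m]
    (hπ : ∀ x, π (g x) = g (x.1 + 1, x.2)) {s : Finset α} (hs : s ∈ permOrbits π) : s.card = m := by
  rw [permOrbits_of_rotate hπ] at hs
  obtain ⟨b, -, rfl⟩ := Finset.mem_image.1 hs
  simp

lemma cycCount_of_rotate [Fintype α] [DecidableEq α] [Fintype β] [NeZero m]
    (hπ : ∀ x, π (g x) = g (x.1 + 1, x.2)) :
    cycCount π = Fintype.card β := by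
  rw [cycCount, permOrbits_of_rotate hπ, Finset.card_image_of_injective _ fun b c h => ?_,
    Finset.card_univ]
  have h0 : ((0 : ZMod m), b) ∈ Finset.univ ×ˢ {c} :=
    Finset.map_injective g.toEmbedding h ▸ by simp
  simpa [eq_comm] using h0

end Rotation

lemma mem_convexHull_triple {E : Type*} [AddCommGroup E] [Module ℝ E] {x y z : E} {a b c : ℝ}
    (ha : 0 ≤ a) (hb : 0 ≤ b) (hc : 0 ≤ c) (habc : a + b + c = 1) :
    a • x + b • y + c • z ∈ convexHull ℝ {x, y, z} := by
  have := (convex_convexHull ℝ {x, y, z}).sum_mem (t := Finset.univ) (w := ![a, b, c])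
    (z := ![x, y, z]) (by simp [Fin.forall_fin_succ, ha, hb, hc])
    (by simp [Fin.sum_univ_three, habc])
    (fun i _ => subset_convexHull ℝ _ (by fin_cases i <;> simp))
  simpa [Fin.sum_univ_three, add_assoc] using this

lemma Homeomorph.nonempty_of_image_eq {X Y : Type*} [TopologicalSpace X] [TopologicalSpace Y]
    (h : X ≃ₜ Y) {s : Set X} {t : Set Y} (hst : h '' s = t) : Nonempty (s ≃ₜ t) :=
  ⟨(h.image s).trans (Homeomorph.setCongr hst)⟩

lemma nonempty_homeomorph_square_closedBall {r : ℝ} (hr : 0 < r) :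
    Nonempty (Set.Icc 0 r ×ˢ Set.Icc 0 r ≃ₜ Metric.closedBall (0 : ℝ × ℝ) 1) := by
  set f := affineHomeomorph (2 / r) (-1) (by positivity)
  refine (f.prodCongr f).nonempty_of_image_eq ?_
  have hf : f '' Set.Icc 0 r = Set.Icc (-1) 1 := by
    rw [affineHomeomorph_image_Icc _ _ _ _ (by positivity), div_mul_cancel₀ _ hr.ne']
    norm_num
  rw [Homeomorph.coe_prodCongr, Set.prodMap_image_prod, hf, Prod.zero_eq_mk,
    ← closedBall_prod_same, Real.closedBall_eq_Icc]
  norm_num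

lemma exists_nat_mem_Icc {k : ℕ} (hk : 1 ≤ k) {x : ℝ} (hx : x ∈ Set.Icc (0 : ℝ) k) :
    ∃ a : ℕ, a < k ∧ x ∈ Set.Icc (a : ℝ) (a + 1) := by
  rcases hx.2.lt_or_eq with hxk | rfl
  · refine ⟨⌊x⌋₊, (Nat.floor_lt hx.1).2 hxk, Nat.floor_le hx.1, (Nat.lt_floor_add_one x).le⟩
  · exact ⟨k - 1, by omega, by simp [Nat.cast_sub hk], by simp [Nat.cast_sub hk]⟩

namespace TPane

lemma upCell_edge (p : TPane) : p.upCell.edge p.dir = p := by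
  obtain ⟨v, d⟩ := p
  rcases ZMod.three_cases d with rfl | rfl | rfl <;> simp +decide [upCell, TCell.edge]

lemma downCell_edge (p : TPane) : p.downCell.edge p.dir = p := by
  obtain ⟨v, d⟩ := p
  rcases ZMod.three_cases d with rfl | rfl | rfl <;> simp +decide [downCell, TCell.edge]

end TPane

lemma mem_boundaryPanes {P : Finset TCell} {p : TPane} :
    p ∈ boundaryPanes P ↔ IsBoundaryPane P p := by
  simp only [boundaryPanes, Finset.mem_filter, Finset.mem_biUnion, and_iff_right_iff_imp]
  have hedge : ∀ c : TCell, c.edge p.dir = p → p ∈ ({c.edge 0, c.edge 1, c.edge 2} : Finset _) :=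
    fun c hc => by rcases ZMod.three_cases p.dir with h | h | h <;> rw [h] at hc <;> simp [hc]
  rintro (⟨hup, -⟩ | ⟨-, hdown⟩)
  · exact ⟨_, hup, hedge _ p.upCell_edge⟩
  · exact ⟨_, hdown, hedge _ p.downCell_edge⟩

lemma BeamTo.unique {P : Finset TCell} {b c d : TPane} (hc : BeamTo P b c) (hd : BeamTo P b d) :
    c = d := by
  obtain ⟨m, hm, hcb, rfl, hmin⟩ := hc
  obtain ⟨n, hn, hdb, rfl, hnmin⟩ := hd
  rcases lt_trichotomy m n with h | rfl | h
  · exact absurd hcb (hnmin m hm h)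
  · rfl
  · exact absurd hdb (hmin n hn h)

section Dynamics

variable {P : Finset TCell} {p : TPane} {a b : ℤ}

def exitPane (st : TPane × TCell) : TPane :=
  st.2.edge (if st.2.up then st.1.dir - 1 else st.1.dir + 1)

lemma bStep_fst (P : Finset TCell) (st : TPane × TCell) : (bStep P st).1 = exitPane st := by
  unfold bStep exitPane
  dsimp only
  split_ifs <;> rfl

lemma bStep_eq_of_exitPane_eq {st : TPane × TCell} {q : TPane} (hq : exitPane st = q)
    (h : ¬ IsBoundaryPane P q) : bStep P st = (q, nextCell q st.2) := by
  subst hq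
  exact if_neg h

-- `bStep_up_i` / `bStep_down_i`: the beam enters an upward / downward cell through its edge
-- labelled `i` and crosses the exit edge into the neighbouring cell.
lemma bStep_up_zero (hp : p.dir = 0) (h : ¬ IsBoundaryPane P ⟨(a + 1, b), 2⟩) :
    bStep P (p, ⟨(a, b), true⟩) = (⟨(a + 1, b), 2⟩, ⟨(a, b), false⟩) := by
  rw [bStep_eq_of_exitPane_eq (by simp +decide [exitPane, hp, TCell.edge]) h]
  simp +decide [nextCell, TPane.upCell, TPane.downCell]

lemma bStep_up_one (hp : p.dir = 1) (h : ¬ IsBoundaryPane P ⟨(a, b), 0⟩) :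
    bStep P (p, ⟨(a, b), true⟩) = (⟨(a, b), 0⟩, ⟨(a, b - 1), false⟩) := by
  rw [bStep_eq_of_exitPane_eq (by simp +decide [exitPane, hp, TCell.edge]) h]
  simp +decide [nextCell, TPane.upCell, TPane.downCell]

lemma bStep_up_two (hp : p.dir = 2) (h : ¬ IsBoundaryPane P ⟨(a, b), 1⟩) :
    bStep P (p, ⟨(a, b), true⟩) = (⟨(a, b), 1⟩, ⟨(a - 1, b), false⟩) := by
  rw [bStep_eq_of_exitPane_eq (by simp +decide [exitPane, hp, TCell.edge]) h]
  simp +decide [nextCell, TPane.upCell, TPane.downCell]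

lemma bStep_down_zero (hp : p.dir = 0) (h : ¬ IsBoundaryPane P ⟨(a + 1, b), 1⟩) :
    bStep P (p, ⟨(a, b), false⟩) = (⟨(a + 1, b), 1⟩, ⟨(a + 1, b), true⟩) := by
  rw [bStep_eq_of_exitPane_eq (by simp +decide [exitPane, hp, TCell.edge]) h]
  simp +decide [nextCell, TPane.upCell]

lemma bStep_down_one (hp : p.dir = 1) (h : ¬ IsBoundaryPane P ⟨(a + 1, b), 2⟩) :
    bStep P (p, ⟨(a, b), false⟩) = (⟨(a + 1, b), 2⟩, ⟨(a, b), true⟩) := by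
  rw [bStep_eq_of_exitPane_eq (by simp +decide [exitPane, hp, TCell.edge]) h]
  simp +decide [nextCell, TPane.upCell]

lemma bStep_down_two (hp : p.dir = 2) (h : ¬ IsBoundaryPane P ⟨(a, b + 1), 0⟩) :
    bStep P (p, ⟨(a, b), false⟩) = (⟨(a, b + 1), 0⟩, ⟨(a, b + 1), true⟩) := by
  rw [bStep_eq_of_exitPane_eq (by simp +decide [exitPane, hp, TCell.edge]) h]
  simp +decide [nextCell, TPane.upCell]

end Dynamics

section Zigzag

variable {α : Type*}

def zigzag (e o : ℕ → α) (m : ℕ) : α := if Even m then e (m / 2) else o (m / 2)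

variable {e o : ℕ → α}

@[simp] lemma zigzag_two_mul (j : ℕ) : zigzag e o (2 * j) = e j := by
  simp [zigzag]

@[simp] lemma zigzag_two_mul_add_one (j : ℕ) : zigzag e o (2 * j + 1) = o j := by
  simp [zigzag, Nat.add_div_of_dvd_right]

lemma zigzag_succ {f : α → α} {n : ℕ} (he : ∀ j, 2 * j < n → f (e j) = o j)
    (ho : ∀ j, 2 * j + 1 < n → f (o j) = e (j + 1)) :
    ∀ m < n, f (zigzag e o m) = zigzag e o (m + 1) := by
  intro m hm
  obtain ⟨j, rfl | rfl⟩ := Nat.even_or_odd' m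
  · simpa using he j hm
  · simpa [show 2 * j + 1 + 1 = 2 * (j + 1) by ring] using ho j hm

lemma zigzag_forall {q : α → Prop} {n : ℕ} (he : ∀ j, 0 < j → 2 * j ≤ n → q (e j))
    (ho : ∀ j, 2 * j + 1 ≤ n → q (o j)) : ∀ m, 0 < m → m ≤ n → q (zigzag e o m) := by
  intro m hm hmn
  obtain ⟨j, rfl | rfl⟩ := Nat.even_or_odd' m
  · simpa using he j (by omega) hmn
  · simpa using ho j hmn

end Zigzag

lemma beamTo_of_trajectory {P : Finset TCell} {b b' : TPane} (s : ℕ → TPane × TCell) (n : ℕ)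
    (h0 : s 0 = (b, startCell P b)) (hs : ∀ m < n, bStep P (s m) = s (m + 1))
    (hint : ∀ m, 0 < m → m ≤ n → ¬ IsBoundaryPane P (s m).1)
    (hend : exitPane (s n) = b') (hb' : IsBoundaryPane P b') : BeamTo P b b' := by
  have hiter : ∀ m ≤ n, (bStep P)^[m] (b, startCell P b) = s m := by
    intro m hm
    induction m with
    | zero => exact h0.symm
    | succ m ih => rw [Function.iterate_succ_apply', ih (by omega), hs m (by omega)]
  refine ⟨n + 1, n.succ_pos, hb', ?_, fun m hm hmn => ?_⟩
  · rw [Function.iterate_succ_apply', hiter n le_rfl, bStep_fst, hend]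
  · rw [hiter m (by omega)]
    exact hint m hm (by omega)

lemma beamTo_of_zigzag {P : Finset TCell} {b b' : TPane} (e o : ℕ → TPane × TCell) (n : ℕ)
    (h0 : e 0 = (b, startCell P b)) (he : ∀ j, 2 * j < n → bStep P (e j) = o j)
    (ho : ∀ j, 2 * j + 1 < n → bStep P (o j) = e (j + 1))
    (he' : ∀ j, 0 < j → 2 * j ≤ n → ¬ IsBoundaryPane P (e j).1)
    (ho' : ∀ j, 2 * j + 1 ≤ n → ¬ IsBoundaryPane P (o j).1)
    (hend : exitPane (zigzag e o n) = b') (hb' : IsBoundaryPane P b') : BeamTo P b b' :=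
  beamTo_of_trajectory (zigzag e o) n (by simpa [zigzag] using h0) (zigzag_succ he ho)
    (zigzag_forall (q := fun st : TPane × TCell => ¬ IsBoundaryPane P st.1) he' ho') hend hb'

section Rhombus

variable {k : ℕ}

lemma mem_rhombus {a b : ℤ} {u : Bool} :
    (⟨(a, b), u⟩ : TCell) ∈ rhombus k ↔ 0 ≤ a ∧ a < k ∧ 0 ≤ b ∧ b < k := by
  simp only [rhombus, Finset.mem_union, Finset.mem_image, Finset.mem_product, Finset.mem_range,
    TCell.mk.injEq, Prod.mk.injEq, Prod.exists]
  constructor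
  · rintro (⟨x, y, ⟨hx, hy⟩, ⟨rfl, rfl⟩, -⟩ | ⟨x, y, ⟨hx, hy⟩, ⟨rfl, rfl⟩, -⟩) <;> omega
  · rintro ⟨h0a, hak, h0b, hbk⟩
    have hab : ((a.toNat : ℤ) = a ∧ (b.toNat : ℤ) = b) ∧ a.toNat < k ∧ b.toNat < k := by omega
    cases u
    · exact .inr ⟨_, _, hab.2, hab.1, rfl⟩
    · exact .inl ⟨_, _, hab.2, hab.1, rfl⟩

lemma isBoundaryPane_rhombus_iff {x y : ℤ} {d : ZMod 3} :
    IsBoundaryPane (rhombus k) ⟨(x, y), d⟩ ↔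
      (d = 0 ∧ 0 ≤ x ∧ x < k ∧ (y = 0 ∨ y = k)) ∨ (d = 1 ∧ 0 ≤ y ∧ y < k ∧ (x = 0 ∨ x = k)) := by
  rcases ZMod.three_cases d with rfl | rfl | rfl <;>
    simp +decide [IsBoundaryPane, TPane.upCell, TPane.downCell, mem_rhombus] <;> omega

def rhombusPane (k : ℕ) (x : ZMod 4 × Fin k) : TPane :=
  ![⟨(x.2, 0), 0⟩, ⟨(x.2, k), 0⟩, ⟨(k, x.2), 1⟩, ⟨(0, x.2), 1⟩] x.1

lemma rhombusPane_injective : Function.Injective (rhombusPane k) := by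
  rintro ⟨i, a⟩ ⟨j, b⟩ h
  have ha := a.isLt
  have hb := b.isLt
  fin_cases i <;> fin_cases j <;> simp +decide [rhombusPane, Prod.ext_iff, Fin.ext_iff] at h ⊢ <;>
    first | exact ⟨rfl, h⟩ | omega

lemma isBoundaryPane_rhombus_iff_exists {p : TPane} :
    IsBoundaryPane (rhombus k) p ↔ ∃ x, rhombusPane k x = p := by
  constructor
  · obtain ⟨⟨x, y⟩, d⟩ := p
    rw [isBoundaryPane_rhombus_iff]
    rintro (⟨rfl, hx0, hxk, rfl | rfl⟩ | ⟨rfl, hy0, hyk, rfl | rfl⟩)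
    · exact ⟨(0, ⟨x.toNat, by omega⟩), by simp [rhombusPane]; omega⟩
    · exact ⟨(1, ⟨x.toNat, by omega⟩), by simp [rhombusPane]; omega⟩
    · exact ⟨(3, ⟨y.toNat, by omega⟩), by simp [rhombusPane]; omega⟩
    · exact ⟨(2, ⟨y.toNat, by omega⟩), by simp [rhombusPane]; omega⟩
  · rintro ⟨⟨i, a⟩, rfl⟩
    have ha := a.isLt
    fin_cases i <;> simp [rhombusPane, isBoundaryPane_rhombus_iff]

def rhombusBoundaryEquiv (k : ℕ) : ZMod 4 × Fin k ≃ boundaryPanes (rhombus k) :=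
  Equiv.ofBijective
    (fun x => ⟨rhombusPane k x, mem_boundaryPanes.2 (isBoundaryPane_rhombus_iff_exists.2 ⟨x, rfl⟩)⟩)
    ⟨fun _ _ h => rhombusPane_injective (congrArg Subtype.val h),
      fun p => (isBoundaryPane_rhombus_iff_exists.1 (mem_boundaryPanes.1 p.2)).imp
        fun _ h => Subtype.ext h⟩

@[simp] lemma rhombusBoundaryEquiv_apply (x : ZMod 4 × Fin k) :
    (rhombusBoundaryEquiv k x : TPane) = rhombusPane k x := rfl

lemma perim_rhombus : perim (rhombus k) = 4 * k := by
  rw [perim, ← Fintype.card_coe, ← Fintype.card_congr (rhombusBoundaryEquiv k)]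
  simp

end Rhombus

section Beams

variable {k a b : ℕ}

lemma beamTo_bottom (ha : a < k) : BeamTo (rhombus k) ⟨(a, 0), 0⟩ ⟨(a, k), 0⟩ := by
  refine beamTo_of_zigzag (fun j => (⟨(a, j), 0⟩, ⟨(a, j), true⟩))
    (fun j => (⟨(a + 1, j), 2⟩, ⟨(a, j), false⟩)) (2 * (k - 1) + 1) ?_ (fun j _ => ?_)
    (fun j hj => ?_) (fun j hj hjn => ?_) (fun j _ => ?_) ?_ ?_
  · simp +decide [startCell, TPane.upCell, mem_rhombus]
    omega
  · exact bStep_up_zero rfl (by simp +decide [isBoundaryPane_rhombus_iff])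
  · rw [bStep_down_two rfl (by simp [isBoundaryPane_rhombus_iff]; omega)]
    push_cast; rfl
  · simp [isBoundaryPane_rhombus_iff]; omega
  · simp +decide [isBoundaryPane_rhombus_iff]
  · simp +decide [exitPane, TCell.edge]; omega
  · simp [isBoundaryPane_rhombus_iff]; omega

lemma beamTo_top (ha : a < k) : BeamTo (rhombus k) ⟨(a, k), 0⟩ ⟨(k, a), 1⟩ := by
  refine beamTo_of_zigzag (fun j => (⟨(a + j, k - j), 0⟩, ⟨(a + j, k - j - 1), false⟩))
    (fun j => (⟨(a + j + 1, k - j - 1), 1⟩, ⟨(a + j + 1, k - j - 1), true⟩)) (2 * (k - a - 1))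
    ?_ (fun j hj => ?_) (fun j hj => ?_) (fun j hj hjn => ?_) (fun j hj => ?_) ?_ ?_
  · simp +decide [startCell, TPane.upCell, TPane.downCell, mem_rhombus]
  · exact bStep_down_zero rfl (by simp [isBoundaryPane_rhombus_iff]; omega)
  · rw [bStep_up_one rfl (by simp [isBoundaryPane_rhombus_iff]; omega)]
    push_cast; ring_nf
  · simp [isBoundaryPane_rhombus_iff]; omega
  · simp [isBoundaryPane_rhombus_iff]; omega
  · simp +decide [exitPane, TCell.edge]; omega
  · simp [isBoundaryPane_rhombus_iff]; omega

lemma beamTo_right (hb : b < k) : BeamTo (rhombus k) ⟨(k, b), 1⟩ ⟨(0, b), 1⟩ := by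
  refine beamTo_of_zigzag (fun j => (⟨(k - j, b), 1⟩, ⟨(k - j - 1, b), false⟩))
    (fun j => (⟨(k - j, b), 2⟩, ⟨(k - j - 1, b), true⟩)) (2 * (k - 1) + 1)
    ?_ (fun j hj => ?_) (fun j hj => ?_) (fun j hj hjn => ?_) (fun j hj => ?_) ?_ ?_
  · simp +decide [startCell, TPane.upCell, TPane.downCell, mem_rhombus]
  · rw [bStep_down_one rfl (by simp +decide [isBoundaryPane_rhombus_iff])]
    ring_nf
  · rw [bStep_up_two rfl (by simp [isBoundaryPane_rhombus_iff]; omega)]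
    push_cast; ring_nf
  · simp [isBoundaryPane_rhombus_iff]; omega
  · simp +decide [isBoundaryPane_rhombus_iff]
  · simp +decide [exitPane, TCell.edge]; omega
  · simp [isBoundaryPane_rhombus_iff]; omega

lemma beamTo_left (hb : b < k) : BeamTo (rhombus k) ⟨(0, b), 1⟩ ⟨(b, 0), 0⟩ := by
  refine beamTo_of_zigzag (fun j => (⟨(j, b - j), 1⟩, ⟨(j, b - j), true⟩))
    (fun j => (⟨(j, b - j), 0⟩, ⟨(j, b - j - 1), false⟩)) (2 * b)
    ?_ (fun j hj => ?_) (fun j hj => ?_) (fun j hj hjn => ?_) (fun j hj => ?_) ?_ ?_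
  · simp +decide [startCell, TPane.upCell, mem_rhombus]
    omega
  · exact bStep_up_one rfl (by simp [isBoundaryPane_rhombus_iff]; omega)
  · rw [bStep_down_zero rfl (by simp [isBoundaryPane_rhombus_iff]; omega)]
    push_cast; ring_nf
  · simp [isBoundaryPane_rhombus_iff]; omega
  · simp [isBoundaryPane_rhombus_iff]; omega
  · simp +decide [exitPane, TCell.edge]
  · simp [isBoundaryPane_rhombus_iff]; omega

end Beams

section Billiards

variable {k : ℕ}

lemma beamTo_rhombusPane (x : ZMod 4 × Fin k) :
    BeamTo (rhombus k) (rhombusPane k x) (rhombusPane k (x.1 + 1, x.2)) := by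
  obtain ⟨i, a, ha⟩ := x
  fin_cases i
  · exact beamTo_bottom ha
  · exact beamTo_top ha
  · exact beamTo_right ha
  · exact beamTo_left ha

def rhombusBilliards (k : ℕ) : Equiv.Perm (boundaryPanes (rhombus k)) :=
  (rhombusBoundaryEquiv k).permCongr ((Equiv.addRight 1).prodCongr (Equiv.refl _))

lemma isBilliards_rhombusBilliards : IsBilliards (rhombus k) (rhombusBilliards k) := by
  intro b
  obtain ⟨⟨i, a⟩, rfl⟩ := (rhombusBoundaryEquiv k).surjective b
  simpa [rhombusBilliards, Equiv.permCongr_apply] using beamTo_rhombusPane (i, a)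

lemma IsBilliards.apply_rhombusBoundaryEquiv {π : Equiv.Perm (boundaryPanes (rhombus k))}
    (hπ : IsBilliards (rhombus k) π) (x : ZMod 4 × Fin k) :
    π (rhombusBoundaryEquiv k x) = rhombusBoundaryEquiv k (x.1 + 1, x.2) :=
  Subtype.ext ((hπ _).unique (beamTo_rhombusPane x))

end Billiards

section Region

def latticeCoords (v : GridV) : ℝ × ℝ := (v.1, v.2)

def latticeEquiv : (ℝ × ℝ) ≃L[ℝ] ℝ × ℝ :=
  LinearEquiv.toContinuousLinearEquiv
    { toFun := fun p => (p.1 + p.2 / 2, p.2 * √3 / 2)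
      invFun := fun q => (q.1 - q.2 / √3, 2 * q.2 / √3)
      map_add' := fun p q => by ext <;> simp <;> ring
      map_smul' := fun c p => by ext <;> simp <;> ring
      left_inv := fun p => by
        ext
        · field_simp; ring
        · field_simp
      right_inv := fun q => by
        ext
        · field_simp; ring
        · field_simp }

lemma TCell.region_eq_image (c : TCell) :
    c.region = latticeEquiv '' convexHull ℝ (latticeCoords '' c.vertices) := by
  rw [TCell.region, Finset.coe_image, show toPlane = latticeEquiv ∘ latticeCoords from rfl,
    Set.image_comp]
  exact (latticeEquiv.toLinearEquiv.toLinearMap.image_convexHull _).symm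

lemma mem_cellHull_of_mem_unitSquare {a b : ℤ} {x y : ℝ} (hx : x ∈ Set.Icc (a : ℝ) (a + 1))
    (hy : y ∈ Set.Icc (b : ℝ) (b + 1)) :
    ∃ u : Bool, (x, y) ∈ convexHull ℝ (latticeCoords '' (⟨(a, b), u⟩ : TCell).vertices) := by
  obtain ⟨hx0, hx1⟩ := hx
  obtain ⟨hy0, hy1⟩ := hy
  -- the diagonal `x + y = a + b + 1` cuts the unit square into the upward and the downward cell
  rcases le_total (x - a + (y - b)) 1 with h | h
  · refine ⟨true, ?_⟩
    convert mem_convexHull_triple (x := ((a : ℝ), (b : ℝ))) (y := ((a : ℝ) + 1, (b : ℝ)))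
      (z := ((a : ℝ), (b : ℝ) + 1)) (by linarith : 0 ≤ 1 - (x - a) - (y - b))
      (by linarith : 0 ≤ x - a) (by linarith : 0 ≤ y - b) (by ring) using 1
    · simp [TCell.vertices, latticeCoords, Set.image_insert_eq]
    · simp only [Prod.smul_mk, smul_eq_mul, Prod.mk_add_mk, Prod.mk.injEq]
      constructor <;> ring
  · refine ⟨false, ?_⟩
    convert mem_convexHull_triple (x := ((a : ℝ) + 1, (b : ℝ))) (y := ((a : ℝ), (b : ℝ) + 1))
      (z := ((a : ℝ) + 1, (b : ℝ) + 1)) (by linarith : 0 ≤ 1 - (y - b))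
      (by linarith : 0 ≤ 1 - (x - a)) (by linarith : 0 ≤ x - a + (y - b) - 1) (by ring) using 1
    · simp [TCell.vertices, latticeCoords, Set.image_insert_eq]
    · simp only [Prod.smul_mk, smul_eq_mul, Prod.mk_add_mk, Prod.mk.injEq]
      constructor <;> ring

lemma iUnion_convexHull_rhombus {k : ℕ} (hk : 1 ≤ k) :
    ⋃ c ∈ rhombus k, convexHull ℝ (latticeCoords '' c.vertices) =
      Set.Icc (0 : ℝ) k ×ˢ Set.Icc (0 : ℝ) k := by
  apply subset_antisymm
  · refine Set.iUnion₂_subset fun ⟨⟨a, b⟩, u⟩ hc => convexHull_min ?_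
      ((convex_Icc _ _).prod (convex_Icc _ _))
    rintro _ ⟨v, hv, rfl⟩
    rw [mem_rhombus] at hc
    have hv' : (0 ≤ v.1 ∧ v.1 ≤ k) ∧ (0 ≤ v.2 ∧ v.2 ≤ k) := by
      cases u <;> simp [TCell.vertices] at hv <;> rcases hv with rfl | rfl | rfl <;> simp <;> omega
    simp only [latticeCoords, Set.mem_prod, Set.mem_Icc]
    exact_mod_cast hv'
  · rintro ⟨x, y⟩ ⟨hx, hy⟩
    obtain ⟨a, hak, hxa⟩ := exists_nat_mem_Icc hk hx
    obtain ⟨b, hbk, hyb⟩ := exists_nat_mem_Icc hk hy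
    obtain ⟨u, hu⟩ := mem_cellHull_of_mem_unitSquare (a := a) (b := b) (by exact_mod_cast hxa)
      (by exact_mod_cast hyb)
    exact Set.mem_iUnion₂.2 ⟨_, mem_rhombus.2 (by omega), hu⟩

lemma polyRegion_rhombus {k : ℕ} (hk : 1 ≤ k) :
    polyRegion (rhombus k) = latticeEquiv '' (Set.Icc (0 : ℝ) k ×ˢ Set.Icc (0 : ℝ) k) := by
  simp only [polyRegion, TCell.region_eq_image, ← Set.image_iUnion₂, iUnion_convexHull_rhombus hk]

lemma isSimpleGridPolygon_rhombus {k : ℕ} (hk : 1 ≤ k) : IsSimpleGridPolygon (rhombus k) := by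
  refine ⟨⟨⟨(0, 0), true⟩, mem_rhombus.2 (by omega)⟩, ?_⟩
  obtain ⟨e⟩ := nonempty_homeomorph_square_closedBall (r := k) (by positivity)
  obtain ⟨e'⟩ := latticeEquiv.toHomeomorph.nonempty_of_image_eq (polyRegion_rhombus hk).symm
  exact ⟨e'.symm.trans e⟩

end Region

/-- **Theorem.**  For every `k ≥ 1`, the rhombus of side length `k` is a simple grid polygon
of perimeter `4k` whose billiards permutation consists of exactly `k` cycles, each of
length 4; in particular `cyc = k = ⌊(perim + 2)/4⌋`. -/
theorem rhombus_perim_and_cycles (k : ℕ) (hk : 1 ≤ k) :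
    IsSimpleGridPolygon (rhombus k) ∧ perim (rhombus k) = 4 * k ∧
    (∃ π : Equiv.Perm ↥(boundaryPanes (rhombus k)), IsBilliards (rhombus k) π) ∧
    ∀ π : Equiv.Perm ↥(boundaryPanes (rhombus k)), IsBilliards (rhombus k) π →
      cycCount π = k ∧ (∀ s ∈ permOrbits π, s.card = 4) ∧
      cycCount π = (perim (rhombus k) + 2) / 4 := by
  refine ⟨isSimpleGridPolygon_rhombus hk, perim_rhombus,
    ⟨_, isBilliards_rhombusBilliards⟩, fun π hπ => ?_⟩
  have hrot := hπ.apply_rhombusBoundaryEquiv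
  have hcyc : cycCount π = k := by rw [cycCount_of_rotate hrot, Fintype.card_fin]
  refine ⟨hcyc, fun s hs => card_of_mem_permOrbits_of_rotate hrot hs, ?_⟩
  rw [hcyc, perim_rhombus]
  omega

end
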